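/- arXiv:2301.13776 — 6 statements merged into one kernel-verified Lean document; each statement's English description precedes it below -/
import Mathlib

section
/- Let $P, R, S$ be real $n\times n$ matrices with $P$ and $S$ symmetric, and let $X$ be a real solution of $XSX - XR + R^TX + P = 0$. Set $H_r = \begin{bmatrix} P & R^T \\ R & -S \end{bmatrix}$. Then the graph subspace $G(X)$ is $H_r$-nonpositive if and only if the matrix $(X^T + X)(R - SX)$ is negative semidefinite. -/
open Matrix

/-- The graph subspace of a real `n × n` matrix `X`. -/
def graphSubspace {n : ℕ} (X : Matrix (Fin n) (Fin n) ℝ) :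
    Set (Fin n ⊕ Fin n → ℝ) :=
  {v | ∃ x : Fin n → ℝ, v = Sum.elim x (X.mulVec x)}

/-- for a real solution `X` of the modified Riccati equation,
`G(X)` is `H_r`-nonpositive iff `(Xᵀ + X)(R - SX)` is negative semidefinite. -/
theorem graph_nonpositive_iff_negSemidef (n : ℕ)
    (P R S X : Matrix (Fin n) (Fin n) ℝ)
    (hP : Pᵀ = P) (hS : Sᵀ = S)
    (hX : X * S * X - X * R + Rᵀ * X + P = 0) :
    (∀ v ∈ graphSubspace X,
        v ⬝ᵥ (Matrix.fromBlocks P Rᵀ R (-S)).mulVec v ≤ 0) ↔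
      ∀ z : Fin n → ℝ, z ⬝ᵥ ((Xᵀ + X) * (R - S * X)).mulVec z ≤ 0 := by
  have h1 : X * R - X * S * X = Rᵀ * X + P := by
    rw [← sub_eq_zero, ← neg_eq_zero, ← hX]; abel
  have key : (Xᵀ + X) * (R - S * X) = P + Rᵀ * X + Xᵀ * R - Xᵀ * S * X := by
    have h2 : (Xᵀ + X) * (R - S * X) = Xᵀ * R - Xᵀ * S * X + (X * R - X * S * X) := by
      noncomm_ring
    rw [h2, h1]; abel
  have calc1 : ∀ x : Fin n → ℝ,
      (Sum.elim x (X *ᵥ x)) ⬝ᵥ (Matrix.fromBlocks P Rᵀ R (-S)) *ᵥ (Sum.elim x (X *ᵥ x))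
        = x ⬝ᵥ ((Xᵀ + X) * (R - S * X)) *ᵥ x := by
    intro x
    have hswap : ∀ (A : Matrix (Fin n) (Fin n) ℝ) (w : Fin n → ℝ),
        (A *ᵥ x) ⬝ᵥ w = x ⬝ᵥ (Aᵀ *ᵥ w) := by
      intro A w
      rw [Matrix.dotProduct_mulVec, Matrix.vecMul_transpose]
    rw [key]
    simp only [Matrix.fromBlocks_mulVec, sumElim_dotProduct_sumElim,
      Matrix.add_mulVec, Matrix.sub_mulVec, Matrix.neg_mulVec, dotProduct_add,
      dotProduct_sub, dotProduct_neg, Sum.elim_comp_inl, Sum.elim_comp_inr, Matrix.mulVec_sub, ← Matrix.mulVec_mulVec, hswap]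
    rw [Matrix.mulVec_add, Matrix.mulVec_neg, dotProduct_add, dotProduct_neg]; ring
  constructor
  · intro h z
    rw [← calc1 z]
    exact h _ ⟨z, rfl⟩
  · intro h v hv
    obtain ⟨x, rfl⟩ := hv
    rw [calc1 x]
    exact h x
end

section
/- Let $P, R, S$ be real $n\times n$ matrices with $P, S$ symmetric, and suppose $M_r = \begin{bmatrix} R & -S \\ P & R^T \end{bmatrix}$ is invertible. If there exists an $n$-dimensional $M_r$-invariant $H_r$-neutral subspace (where $H_r = \begin{bmatrix} P & R^T \\ R & -S \end{bmatrix}$), then that same subspace is $\hat{H}_r$-neutral, where $\hat{H}_r = \begin{bmatrix} 0 & I_n \\ I_n & 0 \end{bmatrix}$. -/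
open Matrix

/-- if `M_r` is invertible and `L` is an `n`-dimensional
`M_r`-invariant `H_r`-neutral subspace, then `L` is `Ĥ_r`-neutral. -/
theorem H_neutral_to_Hhat_neutral (n : ℕ)
    (P R S : Matrix (Fin n) (Fin n) ℝ) (hP : Pᵀ = P) (hS : Sᵀ = S)
    (hinv : IsUnit (Matrix.fromBlocks R (-S) P Rᵀ))
    (L : Submodule ℝ (Fin n ⊕ Fin n → ℝ))
    (hdim : Module.finrank ℝ L = n)
    (hLinv : ∀ v ∈ L, (Matrix.fromBlocks R (-S) P Rᵀ).mulVec v ∈ L)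
    (hneut : ∀ v ∈ L, v ⬝ᵥ (Matrix.fromBlocks P Rᵀ R (-S)).mulVec v = 0) :
    ∀ v ∈ L,
      v ⬝ᵥ (Matrix.fromBlocks 0 1 1 0 : Matrix (Fin n ⊕ Fin n) (Fin n ⊕ Fin n) ℝ).mulVec v = 0 := by
  set M := Matrix.fromBlocks R (-S) P Rᵀ with hM
  set H := Matrix.fromBlocks P Rᵀ R (-S) with hH
  have hHsym : Hᵀ = H := by
    simp [hH, Matrix.fromBlocks_transpose, hP, hS]
  have hbil : ∀ v ∈ L, ∀ w ∈ L, v ⬝ᵥ H.mulVec w = 0 := by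
    intro v hv w hw
    have h1 := hneut (v + w) (L.add_mem hv hw)
    have h2 := hneut v hv
    have h3 := hneut w hw
    have hsymm : w ⬝ᵥ H.mulVec v = v ⬝ᵥ H.mulVec w := by
      rw [Matrix.dotProduct_mulVec, ← Matrix.mulVec_transpose, hHsym, dotProduct_comm]
    simp only [Matrix.mulVec_add, dotProduct_add, add_dotProduct, h2, h3,
      hsymm] at h1
    linarith
  have hMinj : Function.Injective M.mulVec := by
    intro x y hxy
    have h1 : M⁻¹.mulVec (M.mulVec x) = M⁻¹.mulVec (M.mulVec y) := by rw [hxy]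
    simpa [Matrix.mulVec_mulVec, Matrix.nonsing_inv_mul M
      ((Matrix.isUnit_iff_isUnit_det M).mp hinv), Matrix.one_mulVec] using h1
  set f : L →ₗ[ℝ] L := (M.mulVecLin).restrict (p := L) (q := L)
    (fun v hv => hLinv v hv) with hf
  have hfinj : Function.Injective f := by
    intro x y hxy
    apply Subtype.ext
    apply hMinj
    exact congrArg Subtype.val hxy
  have hfsurj : Function.Surjective f := LinearMap.injective_iff_surjective.mp hfinj
  intro v hv
  obtain ⟨w, hw⟩ := hfsurj ⟨v, hv⟩
  have hwv : M.mulVec w.1 = v := congrArg Subtype.val hw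
  have hHhat : (Matrix.fromBlocks 0 1 1 0 : Matrix (Fin n ⊕ Fin n) (Fin n ⊕ Fin n) ℝ) * M
      = H := by
    simp [hM, hH, Matrix.fromBlocks_multiply]
  rw [← hwv, Matrix.mulVec_mulVec, hHhat, hwv]
  exact hbil v hv w.1 w.2
end

section
/- Let $P, R, S$ be real $n\times n$ matrices with $P, S$ symmetric, $S$ positive semidefinite, and the pair $(R, S)$ controllable. Let $\mathcal{L}$ be an $n$-dimensional subspace of $\mathbb{R}^{2n}$ that is invariant under $M_r = \begin{bmatrix} R & -S \\ P & R^T \end{bmatrix}$ and $H_r$-nonnegative, where $H_r = \begin{bmatrix} P & R^T \\ R & -S \end{bmatrix}$. Then $\mathcal{L}$ is a graph subspace: $\mathcal{L} = \operatorname{Im}\begin{bmatrix} I_n \\ X \end{bmatrix}$ for some real $n\times n$ matrix $X$. -/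
open Matrix

/-- The pair `(R, S)` of real `n × n` matrices is controllable:
`rank [S  RS  R²S ⋯ R^{n-1}S] = n`. -/
def Controllable {n : ℕ} (R S : Matrix (Fin n) (Fin n) ℝ) : Prop :=
  (Matrix.of fun (i : Fin n) (p : Fin n × Fin n) =>
    (R ^ (p.1 : ℕ) * S) i p.2).rank = n

/-- with `S ⪰ 0` and `(R,S)` controllable, every `n`-dimensional
`M_r`-invariant `H_r`-nonnegative subspace `L` of `ℝ^{2n}` is a graph
subspace. -/
theorem invariant_nonneg_subspace_is_graph (n : ℕ)
    (P R S : Matrix (Fin n) (Fin n) ℝ) (hP : Pᵀ = P) (hS : Sᵀ = S)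
    (hSpsd : S.PosSemidef) (hctrl : Controllable R S)
    (L : Submodule ℝ (Fin n ⊕ Fin n → ℝ))
    (hdim : Module.finrank ℝ L = n)
    (hinv : ∀ v ∈ L, (Matrix.fromBlocks R (-S) P Rᵀ).mulVec v ∈ L)
    (hnonneg : ∀ v ∈ L, 0 ≤ v ⬝ᵥ (Matrix.fromBlocks P Rᵀ R (-S)).mulVec v) :
    ∃ X : Matrix (Fin n) (Fin n) ℝ,
      ∀ v, v ∈ L ↔ ∃ x : Fin n → ℝ, v = Sum.elim x (X.mulVec x) := by
  -- Step 0: any z with `Sum.elim (0 : Fin n → ℝ) z ∈ L` satisfies `S z = 0`.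
  have hSz : ∀ z : Fin n → ℝ, Sum.elim (0 : Fin n → ℝ) z ∈ L → S.mulVec z = 0 := by
    intro z hz
    have h0 := hnonneg _ hz
    rw [fromBlocks_mulVec, sumElim_dotProduct_sumElim] at h0
    simp only [Sum.elim_comp_inl, Sum.elim_comp_inr, mulVec_zero, zero_add, dotProduct_zero,
      neg_mulVec, dotProduct_neg, zero_dotProduct] at h0
    have h1 : 0 ≤ z ⬝ᵥ S.mulVec z := by simpa using hSpsd.dotProduct_mulVec_nonneg z
    have h2 : z ⬝ᵥ S.mulVec z = 0 := le_antisymm (by linarith) h1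
    have := (hSpsd.dotProduct_mulVec_zero_iff z).mp (by simpa using h2)
    exact this
  -- Step 1: any z with `Sum.elim (0 : Fin n → ℝ) z ∈ L` also has `Sum.elim 0 (Rᵀ z) ∈ L`.
  have hstep : ∀ z : Fin n → ℝ, Sum.elim (0 : Fin n → ℝ) z ∈ L → Sum.elim (0 : Fin n → ℝ) (Rᵀ.mulVec z) ∈ L := by
    intro z hz
    have hm := hinv _ hz
    rw [fromBlocks_mulVec] at hm
    have hSz0 := hSz z hz
    simpa [hSz0, neg_mulVec] using hm
  -- Step 2: iterate
  have hiter : ∀ (k : ℕ) (z : Fin n → ℝ), Sum.elim (0 : Fin n → ℝ) z ∈ L →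
      Sum.elim (0 : Fin n → ℝ) ((Rᵀ ^ k).mulVec z) ∈ L := by
    intro k
    induction k with
    | zero => intro z hz; simpa using hz
    | succ k ih =>
        intro z hz
        have := hstep _ (ih z hz)
        rw [mulVec_mulVec] at this
        have hcomm : Rᵀ * Rᵀ ^ k = Rᵀ ^ (k+1) := (pow_succ' Rᵀ k).symm
        rwa [hcomm] at this
  -- Step 3: the "vertical" part of L is trivial.
  have hker : ∀ z : Fin n → ℝ, Sum.elim (0 : Fin n → ℝ) z ∈ L → z = 0 := by
    intro z hz
    have hSall : ∀ k : ℕ, S.mulVec ((Rᵀ ^ k).mulVec z) = 0 := fun k => hSz _ (hiter k z hz)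
    -- vecMul z C = 0 where C is the controllability matrix
    set C : Matrix (Fin n) (Fin n × Fin n) ℝ :=
      Matrix.of fun (i : Fin n) (p : Fin n × Fin n) => (R ^ (p.1 : ℕ) * S) i p.2 with hC
    have hvm : vecMul z C = 0 := by
      funext p
      have h1 : S.mulVec ((Rᵀ ^ (p.1 : ℕ)).mulVec z) = 0 := hSall p.1
      have h2 : vecMul z (R ^ (p.1 : ℕ) * S) = 0 := by
        have : (R ^ (p.1 : ℕ) * S)ᵀ.mulVec z = 0 := by
          rw [transpose_mul, hS, ← mulVec_mulVec, transpose_pow, h1]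
        rwa [← mulVec_transpose]
      calc vecMul z C p = vecMul z (R ^ (p.1 : ℕ) * S) p.2 := by
            simp [vecMul, dotProduct, hC]
        _ = 0 := by rw [h2]; rfl
    -- controllability: C has full rank, so its columns span ℝⁿ.
    have hrange : LinearMap.range C.mulVecLin = ⊤ := by
      have hr : Module.finrank ℝ (LinearMap.range C.mulVecLin) = n := hctrl
      exact Submodule.eq_top_of_finrank_eq (by simp [hr, Module.finrank_fintype_fun_eq_card])
    obtain ⟨u, hu⟩ : ∃ u, C.mulVec u = z := by
      have := hrange ▸ Submodule.mem_top (x := z) (R := ℝ)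
      exact this
    have : z ⬝ᵥ z = 0 := by
      calc z ⬝ᵥ z = z ⬝ᵥ C.mulVec u := by rw [hu]
        _ = vecMul z C ⬝ᵥ u := dotProduct_mulVec z C u
        _ = 0 := by rw [hvm, zero_dotProduct]
    exact dotProduct_self_eq_zero.mp this
  -- Step 4: the projection L → ℝⁿ onto the first coordinates is bijective.
  let p1 : (Fin n ⊕ Fin n → ℝ) →ₗ[ℝ] (Fin n → ℝ) := LinearMap.funLeft ℝ ℝ Sum.inl
  let p2 : (Fin n ⊕ Fin n → ℝ) →ₗ[ℝ] (Fin n → ℝ) := LinearMap.funLeft ℝ ℝ Sum.inr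
  let f : L →ₗ[ℝ] (Fin n → ℝ) := p1 ∘ₗ L.subtype
  have hfinj : Function.Injective f := by
    rw [← LinearMap.ker_eq_bot, LinearMap.ker_eq_bot']
    intro ⟨v, hv⟩ hfv
    have hvinl : ∀ i, v (Sum.inl i) = 0 := fun i => congrFun hfv i
    have hveq : v = Sum.elim (0 : Fin n → ℝ) (v ∘ Sum.inr) := by
      funext s; cases s with
      | inl i => simp [hvinl i]
      | inr i => simp
    have hz := hker (v ∘ Sum.inr) (hveq ▸ hv)
    have : v = 0 := by
      funext s; cases s with
      | inl i => exact hvinl i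
      | inr i => exact congrFun hz i
    exact Subtype.ext this
  have hfsurj : Function.Surjective f := by
    have h1 : Module.finrank ℝ L = Module.finrank ℝ (Fin n → ℝ) := by
      simp [hdim, Module.finrank_fintype_fun_eq_card]
    exact (LinearMap.injective_iff_surjective_of_finrank_eq_finrank h1).mp hfinj
  let e : L ≃ₗ[ℝ] (Fin n → ℝ) := LinearEquiv.ofBijective f ⟨hfinj, hfsurj⟩
  let g : (Fin n → ℝ) →ₗ[ℝ] (Fin n → ℝ) := p2 ∘ₗ L.subtype ∘ₗ (e.symm : (Fin n → ℝ) →ₗ[ℝ] L)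
  refine ⟨LinearMap.toMatrix' g, fun v => ?_⟩
  have hXg : ∀ x, (LinearMap.toMatrix' g).mulVec x = g x := by
    intro x
    rw [← Matrix.toLin'_apply, Matrix.toLin'_toMatrix']
  constructor
  · intro hv
    refine ⟨v ∘ Sum.inl, ?_⟩
    have he : e ⟨v, hv⟩ = v ∘ Sum.inl := rfl
    have hsymm : e.symm (v ∘ Sum.inl) = ⟨v, hv⟩ := by rw [← he, LinearEquiv.symm_apply_apply]
    have hg : g (v ∘ Sum.inl) = v ∘ Sum.inr := by
      simp only [g, LinearMap.comp_apply, LinearEquiv.coe_coe, hsymm]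
      rfl
    rw [hXg, hg]
    funext s; cases s <;> simp
  · rintro ⟨x, rfl⟩
    rw [hXg]
    have hmem := (e.symm x).2
    have : (Sum.elim x (g x) : Fin n ⊕ Fin n → ℝ) = (e.symm x : Fin n ⊕ Fin n → ℝ) := by
      funext s; cases s with
      | inl i =>
          have : e (e.symm x) = x := e.apply_symm_apply x
          have h2 : ((e.symm x : Fin n ⊕ Fin n → ℝ)) ∘ Sum.inl = x := this
          simpa using (congrFun h2 i).symm
      | inr i => rfl
    rw [this]; exact hmem
end

section
/- Let $P, R, S$ be real $n\times n$ matrices with $P, S$ symmetric, $S \ge 0$, and $(R, S)$ controllable. Then the equation $XSX - XR + R^TX + P = 0$ has a real skew-symmetric solution $X$ if and only if there exists an $n$-dimensional $M_r$-invariant $\hat{H}_r$-neutral subspace of $\mathbb{R}^{2n}$, where $M_r = \begin{bmatrix} R & -S \\ P & R^T \end{bmatrix}$ and $\hat{H}_r = \begin{bmatrix} 0 & I_n \\ I_n & 0 \end{bmatrix}$. -/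
open Matrix

private lemma matrix_eq_of_mulVec_eq {n m : ℕ} {A B : Matrix (Fin n) (Fin m) ℝ}
    (h : ∀ x, A *ᵥ x = B *ᵥ x) : A = B := by
  ext i j
  have := congrFun (h (Pi.single j 1)) i
  simpa [Matrix.mulVec_single] using this

private lemma matrix_eq_zero_of_forall_dot {n m : ℕ} {A : Matrix (Fin n) (Fin m) ℝ}
    (h : ∀ x y, x ⬝ᵥ A *ᵥ y = 0) : A = 0 := by
  ext i j
  have := h (Pi.single i 1) (Pi.single j 1)
  simpa [Matrix.mulVec_single] using this

private lemma dot_Hh {n : ℕ} (u v : Fin n ⊕ Fin n → ℝ) :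
    u ⬝ᵥ (Matrix.fromBlocks 0 1 1 0 : Matrix (Fin n ⊕ Fin n) (Fin n ⊕ Fin n) ℝ) *ᵥ v
      = (u ∘ Sum.inl) ⬝ᵥ (v ∘ Sum.inr) + (u ∘ Sum.inr) ⬝ᵥ (v ∘ Sum.inl) := by
  rw [Matrix.fromBlocks_mulVec]
  simp only [Matrix.zero_mulVec, Matrix.one_mulVec, zero_add, add_zero]
  rw [← Sum.elim_comp_inl_inr u, sumElim_dotProduct_sumElim]
  simp

private lemma Mr_mulVec {n : ℕ} (P R S : Matrix (Fin n) (Fin n) ℝ) (v : Fin n ⊕ Fin n → ℝ) :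
    (Matrix.fromBlocks R (-S) P Rᵀ) *ᵥ v =
      Sum.elim (R *ᵥ (v ∘ Sum.inl) - S *ᵥ (v ∘ Sum.inr))
        (P *ᵥ (v ∘ Sum.inl) + Rᵀ *ᵥ (v ∘ Sum.inr)) := by
  rw [Matrix.fromBlocks_mulVec]
  simp [Matrix.neg_mulVec, sub_eq_add_neg]

/-- with `S ⪰ 0` and `(R,S)` controllable, the modified Riccati
equation `XSX - XR + RᵀX + P = 0` has a real skew-symmetric solution iff
there is an `n`-dimensional `M_r`-invariant `Ĥ_r`-neutral subspace. -/
theorem skew_solution_iff_neutral_subspace (n : ℕ)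
    (P R S : Matrix (Fin n) (Fin n) ℝ) (hP : Pᵀ = P) (hS : Sᵀ = S)
    (hSpsd : S.PosSemidef) (hctrl : Controllable R S) :
    (∃ X : Matrix (Fin n) (Fin n) ℝ, Xᵀ = -X ∧
        X * S * X - X * R + Rᵀ * X + P = 0) ↔
      ∃ L : Submodule ℝ (Fin n ⊕ Fin n → ℝ),
        Module.finrank ℝ L = n ∧
        (∀ v ∈ L, (Matrix.fromBlocks R (-S) P Rᵀ).mulVec v ∈ L) ∧
        (∀ v ∈ L,
          v ⬝ᵥ (Matrix.fromBlocks 0 1 1 0 : Matrix (Fin n ⊕ Fin n) (Fin n ⊕ Fin n) ℝ).mulVec v = 0) := by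
  constructor
  · rintro ⟨X, hskew, heq⟩
    -- graph subspace
    set g : (Fin n → ℝ) →ₗ[ℝ] (Fin n ⊕ Fin n → ℝ) :=
      { toFun := fun x => Sum.elim x (X *ᵥ x)
        map_add' := by
          intro x y; funext i; cases i <;> simp [Matrix.mulVec_add]
        map_smul' := by
          intro c x; funext i; cases i <;> simp [Matrix.mulVec_smul] } with hg
    have hgapp : ∀ x, g x = Sum.elim x (X *ᵥ x) := fun x => rfl
    have hginj : Function.Injective g := by
      intro x y hxy
      have := congrArg (fun v => v ∘ Sum.inl) hxy
      simpa [hgapp] using this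
    refine ⟨LinearMap.range g, ?_, ?_, ?_⟩
    · rw [LinearMap.finrank_range_of_inj hginj, Module.finrank_fin_fun]
    · rintro v ⟨x, rfl⟩
      refine ⟨R *ᵥ x - S *ᵥ (X *ᵥ x), ?_⟩
      have hmx : X *ᵥ (R *ᵥ x - S *ᵥ (X *ᵥ x)) = P *ᵥ x + Rᵀ *ᵥ (X *ᵥ x) := by
        have h2 : X * R - X * S * X = P + Rᵀ * X := by
          rw [← sub_eq_zero, show X * R - X * S * X - (P + Rᵀ * X)
            = -(X * S * X - X * R + Rᵀ * X + P) by noncomm_ring, heq, neg_zero]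
        have := congrArg (fun M => M *ᵥ x) h2
        simpa [Matrix.sub_mulVec, Matrix.add_mulVec, Matrix.mulVec_sub,
          ← Matrix.mulVec_mulVec] using this
      rw [hgapp, hgapp, Mr_mulVec]
      simp only [Sum.elim_comp_inl, Sum.elim_comp_inr]
      rw [hmx]
    · rintro v ⟨x, rfl⟩
      rw [hgapp, dot_Hh]
      simp only [Sum.elim_comp_inl, Sum.elim_comp_inr]
      have h1 : x ⬝ᵥ (X *ᵥ x) = -(x ⬝ᵥ (X *ᵥ x)) := by
        calc x ⬝ᵥ (X *ᵥ x) = (x ᵥ* X) ⬝ᵥ x := by rw [Matrix.dotProduct_mulVec]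
        _ = (Xᵀ *ᵥ x) ⬝ᵥ x := by rw [Matrix.mulVec_transpose]
        _ = -((X *ᵥ x) ⬝ᵥ x) := by rw [hskew]; simp [Matrix.neg_mulVec]
        _ = -(x ⬝ᵥ (X *ᵥ x)) := by rw [dotProduct_comm]
      have h2 : (X *ᵥ x) ⬝ᵥ x = x ⬝ᵥ (X *ᵥ x) := dotProduct_comm _ _
      linarith
  · rintro ⟨L, hdim, hinv, hneu⟩
    -- polarized neutrality
    have hneu2 : ∀ v ∈ L, ∀ w ∈ L,
        v ⬝ᵥ (Matrix.fromBlocks 0 1 1 0 : Matrix (Fin n ⊕ Fin n) (Fin n ⊕ Fin n) ℝ) *ᵥ w = 0 := by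
      intro v hv w hw
      have hvw := hneu (v + w) (L.add_mem hv hw)
      have hv0 := hneu v hv
      have hw0 := hneu w hw
      rw [dot_Hh] at hvw hv0 hw0 ⊢
      have hexp : ((v + w) ∘ Sum.inl) ⬝ᵥ ((v + w) ∘ Sum.inr)
          + ((v + w) ∘ Sum.inr) ⬝ᵥ ((v + w) ∘ Sum.inl)
          = ((v ∘ Sum.inl) ⬝ᵥ (v ∘ Sum.inr) + (v ∘ Sum.inr) ⬝ᵥ (v ∘ Sum.inl))
          + ((w ∘ Sum.inl) ⬝ᵥ (w ∘ Sum.inr) + (w ∘ Sum.inr) ⬝ᵥ (w ∘ Sum.inl))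
          + 2 * ((v ∘ Sum.inl) ⬝ᵥ (w ∘ Sum.inr) + (v ∘ Sum.inr) ⬝ᵥ (w ∘ Sum.inl)) := by
        have e1 : (v + w) ∘ Sum.inl = (v ∘ Sum.inl) + (w ∘ Sum.inl) := rfl
        have e2 : (v + w) ∘ Sum.inr = (v ∘ Sum.inr) + (w ∘ Sum.inr) := rfl
        rw [e1, e2]
        simp only [add_dotProduct, dotProduct_add]
        rw [dotProduct_comm (w ∘ Sum.inl) (v ∘ Sum.inr),
          dotProduct_comm (w ∘ Sum.inr) (v ∘ Sum.inl)]
        ring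
      rw [hvw, hv0, hw0] at hexp
      linarith
    -- degenerate vectors are zero
    have hstep : ∀ z : Fin n → ℝ, Sum.elim (0 : Fin n → ℝ) z ∈ L →
        S *ᵥ z = 0 ∧ Sum.elim (0 : Fin n → ℝ) (Rᵀ *ᵥ z) ∈ L := by
      intro z hz
      have hm := hinv _ hz
      rw [Mr_mulVec] at hm
      simp only [Sum.elim_comp_inl, Sum.elim_comp_inr, Matrix.mulVec_zero,
        zero_sub, zero_add] at hm
      have h0 := hneu2 _ hz _ hm
      rw [dot_Hh] at h0
      simp only [Sum.elim_comp_inl, Sum.elim_comp_inr, zero_dotProduct,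
        dotProduct_neg, zero_add, neg_eq_zero] at h0
      have hSz : S *ᵥ z = 0 :=
        (hSpsd.dotProduct_mulVec_zero_iff z).mp (by simpa using h0)
      refine ⟨hSz, ?_⟩
      rw [hSz, neg_zero] at hm
      exact hm
    have hdeg : ∀ v ∈ L, v ∘ Sum.inl = 0 → v = 0 := by
      intro v hv hv1
      set y := v ∘ Sum.inr with hy
      have hvel : v = Sum.elim (0 : Fin n → ℝ) y := by
        funext i; cases i with
        | inl i => exact congrFun hv1 i
        | inr i => rfl
      have hk : ∀ k : ℕ, Sum.elim (0 : Fin n → ℝ) ((Rᵀ) ^ k *ᵥ y) ∈ L := by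
        intro k
        induction k with
        | zero =>
          have := hv
          rw [hvel] at this
          simpa [Matrix.one_mulVec] using this
        | succ k ih =>
          have := (hstep _ ih).2
          rwa [Matrix.mulVec_mulVec, ← pow_succ'] at this
      have hSy : ∀ k : ℕ, S *ᵥ ((Rᵀ) ^ k *ᵥ y) = 0 := fun k => (hstep _ (hk k)).1
      -- controllability implies y = 0
      have hy0 : y = 0 := by
        set C := (Matrix.of fun (i : Fin n) (p : Fin n × Fin n) =>
          (R ^ (p.1 : ℕ) * S) i p.2) with hC
        have hCy : Cᵀ *ᵥ y = 0 := by
          funext p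
          have key : S * (Rᵀ) ^ (p.1 : ℕ) = (R ^ (p.1 : ℕ) * S)ᵀ := by
            rw [Matrix.transpose_mul, Matrix.transpose_pow, hS]
          have : (Cᵀ *ᵥ y) p = (S *ᵥ ((Rᵀ) ^ (p.1 : ℕ) *ᵥ y)) p.2 := by
            rw [Matrix.mulVec_mulVec, key]
            simp only [Matrix.mulVec, dotProduct, Matrix.transpose_apply, hC,
              Matrix.of_apply]
          rw [this, hSy]
          rfl
        have hrk : (Cᵀ).rank = n := by
          rw [Matrix.rank_transpose]; exact hctrl
        have hker : LinearMap.ker (Cᵀ).mulVecLin = ⊥ := by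
          have h1 := LinearMap.finrank_range_add_finrank_ker (Cᵀ).mulVecLin
          rw [Module.finrank_fin_fun] at h1
          have : Module.finrank ℝ (LinearMap.ker (Cᵀ).mulVecLin) = 0 := by
            have h2 : Module.finrank ℝ (LinearMap.range (Cᵀ).mulVecLin) = n := hrk
            omega
          exact Submodule.finrank_eq_zero.mp this
        have : y ∈ LinearMap.ker (Cᵀ).mulVecLin :=
          LinearMap.mem_ker.mpr (by rw [Matrix.mulVecLin_apply]; exact hCy)
        rw [hker] at this
        simpa using this
      rw [hvel, hy0]
      funext i; cases i <;> rfl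
    -- L is a graph
    haveI : FiniteDimensional ℝ L := FiniteDimensional.finiteDimensional_submodule L
    set π₁ : (Fin n ⊕ Fin n → ℝ) →ₗ[ℝ] (Fin n → ℝ) := LinearMap.funLeft ℝ ℝ Sum.inl with hπ₁
    set π₂ : (Fin n ⊕ Fin n → ℝ) →ₗ[ℝ] (Fin n → ℝ) := LinearMap.funLeft ℝ ℝ Sum.inr with hπ₂
    set f0 : L →ₗ[ℝ] (Fin n → ℝ) := π₁ ∘ₗ L.subtype with hf0
    have hf0inj : Function.Injective f0 := by
      rw [← LinearMap.ker_eq_bot]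
      rw [Submodule.eq_bot_iff]
      rintro ⟨v, hv⟩ hker
      have : v ∘ Sum.inl = 0 := hker
      have := hdeg v hv this
      exact Subtype.ext this
    have hfd : Module.finrank ℝ L = Module.finrank ℝ (Fin n → ℝ) := by
      rw [hdim, Module.finrank_fin_fun]
    set e := f0.linearEquivOfInjective hf0inj hfd with he
    set f : (Fin n → ℝ) →ₗ[ℝ] (Fin n → ℝ) := π₂ ∘ₗ L.subtype ∘ₗ (e.symm : (Fin n → ℝ) →ₗ[ℝ] L) with hf
    set X := LinearMap.toMatrix' f with hX
    have hXapp : ∀ x, X *ᵥ x = f x := by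
      intro x
      rw [hX, ← Matrix.toLin'_apply, Matrix.toLin'_toMatrix']
    have hux : ∀ x : Fin n → ℝ, ((e.symm x : L) : Fin n ⊕ Fin n → ℝ) = Sum.elim x (X *ᵥ x) := by
      intro x
      have h1 : ((e.symm x : L) : Fin n ⊕ Fin n → ℝ) ∘ Sum.inl = x := by
        exact e.apply_symm_apply x
      funext i; cases i with
      | inl i => exact congrFun h1 i
      | inr i =>
        have : (X *ᵥ x) i = ((e.symm x : L) : Fin n ⊕ Fin n → ℝ) (Sum.inr i) := by
          rw [hXapp]; rfl
        rw [show Sum.elim x (X *ᵥ x) (Sum.inr i) = (X *ᵥ x) i from rfl, this]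
    have hmem : ∀ x : Fin n → ℝ, Sum.elim x (X *ᵥ x) ∈ L := by
      intro x
      rw [← hux]
      exact (e.symm x : L).2
    have hgraph : ∀ v ∈ L, v = Sum.elim (v ∘ Sum.inl) (X *ᵥ (v ∘ Sum.inl)) := by
      intro v hv
      have h1 : v - Sum.elim (v ∘ Sum.inl) (X *ᵥ (v ∘ Sum.inl)) ∈ L :=
        L.sub_mem hv (hmem _)
      have h2 : (v - Sum.elim (v ∘ Sum.inl) (X *ᵥ (v ∘ Sum.inl))) ∘ Sum.inl = 0 := by
        funext i; simp
      have := hdeg _ h1 h2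
      have := sub_eq_zero.mp this
      exact this
    refine ⟨X, ?_, ?_⟩
    · -- skew-symmetry
      have hd : ∀ x x' : Fin n → ℝ, x ⬝ᵥ ((Xᵀ + X) *ᵥ x') = 0 := by
        intro x x'
        have h0 := hneu2 _ (hmem x) _ (hmem x')
        rw [dot_Hh] at h0
        simp only [Sum.elim_comp_inl, Sum.elim_comp_inr] at h0
        have h1 : (X *ᵥ x) ⬝ᵥ x' = x ⬝ᵥ (Xᵀ *ᵥ x') := by
          rw [Matrix.dotProduct_mulVec, Matrix.vecMul_transpose]
        rw [h1] at h0
        rw [Matrix.add_mulVec, dotProduct_add]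
        linarith
      have h0 := matrix_eq_zero_of_forall_dot hd
      exact eq_neg_of_add_eq_zero_left h0
    · -- Riccati equation
      have hvec : ∀ x : Fin n → ℝ,
          (P + Rᵀ * X) *ᵥ x = (X * R - X * S * X) *ᵥ x := by
        intro x
        have hm := hinv _ (hmem x)
        rw [Mr_mulVec] at hm
        simp only [Sum.elim_comp_inl, Sum.elim_comp_inr] at hm
        have hgr := hgraph _ hm
        have hcomp : P *ᵥ x + Rᵀ *ᵥ (X *ᵥ x) = X *ᵥ (R *ᵥ x - S *ᵥ (X *ᵥ x)) := by
          have h3 := congrArg (fun v => v ∘ Sum.inr) hgr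
          simpa [Sum.elim_comp_inl, Sum.elim_comp_inr] using h3
        calc (P + Rᵀ * X) *ᵥ x = P *ᵥ x + Rᵀ *ᵥ (X *ᵥ x) := by
              rw [Matrix.add_mulVec, ← Matrix.mulVec_mulVec]
        _ = X *ᵥ (R *ᵥ x - S *ᵥ (X *ᵥ x)) := hcomp
        _ = (X * R - X * S * X) *ᵥ x := by
              rw [Matrix.mulVec_sub, Matrix.sub_mulVec]
              simp [Matrix.mulVec_mulVec, Matrix.mul_assoc]
      have h0 := matrix_eq_of_mulVec_eq hvec
      rw [show X * S * X - X * R + Rᵀ * X + P = (P + Rᵀ * X) - (X * R - X * S * X)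
        by noncomm_ring, h0, sub_self]
end

section
/- Let $Q(x) = \sum_{j=0}^{2}Q_jx^j$ be a real $n\times n$ symmetric matrix polynomial with $Q_0 = I_n$, and set $M_r = \begin{bmatrix} -\frac{1}{2}Q_1 & -I_n \\ Q_2 - \frac{1}{4}Q_1^2 & -\frac{1}{2}Q_1 \end{bmatrix}$. Then the $2n\times 2n$ matrix polynomial $xI_{2n} - M_r$ is equivalent to $\begin{bmatrix} \operatorname{rev}Q(x) & 0 \\ 0 & I_n \end{bmatrix}$, where $\operatorname{rev}Q(x) = x^2 I_n + x Q_1 + Q_2$; i.e., there exist matrix polynomials $E(x), F(x)$ with constant nonzero determinants such that $E(x)(xI_{2n}-M_r)F(x) = \begin{bmatrix} \operatorname{rev}Q(x) & 0 \\ 0 & I_n \end{bmatrix}$. -/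
open Matrix Polynomial

private lemma fromBlocks_sub' {l m o p : Type*} {α : Type*} [SubtractionMonoid α]
    (A A' : Matrix l m α) (B B' : Matrix l p α) (C C' : Matrix o m α) (D D' : Matrix o p α) :
    Matrix.fromBlocks A B C D - Matrix.fromBlocks A' B' C' D' =
      Matrix.fromBlocks (A - A') (B - B') (C - C') (D - D') := by
  ext (i | i) (j | j) <;> simp [Matrix.sub_apply]

/-- for `Q(x) = I + Q₁x + Q₂x²` symmetric with `Q₀ = I`, and
`M_r = [[-½Q₁, -I], [Q₂ - ¼Q₁², -½Q₁]]`, the matrix polynomial `xI₂ₙ - M_r`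
is equivalent to `diag(rev Q(x), Iₙ)`, where `rev Q(x) = x²I + xQ₁ + Q₂`. -/
theorem linearization_equiv_degree_two (n : ℕ)
    (Q1 Q2 : Matrix (Fin n) (Fin n) ℝ) (hQ1 : Q1ᵀ = Q1) (hQ2 : Q2ᵀ = Q2) :
    ∃ E F : Matrix (Fin n ⊕ Fin n) (Fin n ⊕ Fin n) (Polynomial ℝ),
      (∃ c : ℝ, c ≠ 0 ∧ E.det = Polynomial.C c) ∧
      (∃ c : ℝ, c ≠ 0 ∧ F.det = Polynomial.C c) ∧
      E * ((Polynomial.X : Polynomial ℝ) • (1 : Matrix (Fin n ⊕ Fin n) (Fin n ⊕ Fin n) (Polynomial ℝ)) -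
            (Matrix.fromBlocks (-((2⁻¹ : ℝ) • Q1)) (-1) (Q2 - (4⁻¹ : ℝ) • (Q1 * Q1))
              (-((2⁻¹ : ℝ) • Q1))).map Polynomial.C) * F =
        Matrix.fromBlocks
          (((Polynomial.X : Polynomial ℝ) ^ 2) • (1 : Matrix (Fin n) (Fin n) (Polynomial ℝ)) +
            (Polynomial.X : Polynomial ℝ) • Q1.map Polynomial.C + Q2.map Polynomial.C)
          0 0 1 := by
  classical
  set R := Polynomial ℝ
  set A1 : Matrix (Fin n) (Fin n) R := Q1.map Polynomial.C with hA1
  set A2 : Matrix (Fin n) (Fin n) R := Q2.map Polynomial.C with hA2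
  set D : Matrix (Fin n) (Fin n) R := (X : R) • 1 + Polynomial.C (2⁻¹ : ℝ) • A1 with hD
  set S : Matrix (Fin n) (Fin n) R := A2 - Polynomial.C (4⁻¹ : ℝ) • (A1 * A1) with hS
  set P : Matrix (Fin n) (Fin n) R :=
    ((X : R) ^ 2) • (1 : Matrix (Fin n) (Fin n) R) + (X : R) • A1 + A2 with hP
  -- map lemmas
  have hmapsmul : ∀ (r : ℝ) (M : Matrix (Fin n) (Fin n) ℝ),
      (r • M).map Polynomial.C = Polynomial.C r • M.map Polynomial.C := by
    intro r M
    ext i j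
    simp [Matrix.map_apply, Matrix.smul_apply]
  have hmapmul : (Q1 * Q1).map (Polynomial.C : ℝ →+* Polynomial ℝ) = A1 * A1 :=
    Matrix.map_mul
  -- the middle matrix in block form
  have hA : ((X : R) • (1 : Matrix (Fin n ⊕ Fin n) (Fin n ⊕ Fin n) R) -
      (Matrix.fromBlocks (-((2⁻¹ : ℝ) • Q1)) (-1) (Q2 - (4⁻¹ : ℝ) • (Q1 * Q1))
        (-((2⁻¹ : ℝ) • Q1))).map Polynomial.C) = Matrix.fromBlocks D 1 (-S) D := by
    have hmapneg : ∀ (M : Matrix (Fin n) (Fin n) ℝ),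
        (-M).map (Polynomial.C : ℝ → Polynomial ℝ) = -(M.map Polynomial.C) := by
      intro M; ext i j; simp
    have hmapsub : ∀ (M N : Matrix (Fin n) (Fin n) ℝ),
        (M - N).map (Polynomial.C : ℝ → Polynomial ℝ) = M.map Polynomial.C - N.map Polynomial.C := by
      intro M N; ext i j; simp
    have hmapone : (1 : Matrix (Fin n) (Fin n) ℝ).map (Polynomial.C : ℝ → Polynomial ℝ) = 1 :=
      Matrix.map_one _ (map_zero _) (map_one _)
    rw [← fromBlocks_one, fromBlocks_smul, fromBlocks_map, fromBlocks_sub']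
    simp only [hmapneg, hmapsub, hmapsmul, hmapmul, hmapone, smul_zero, sub_neg_eq_add,
      zero_add, zero_sub]
    rfl
  -- key algebraic identity
  have hc : Polynomial.C (2⁻¹ : ℝ) * Polynomial.C (2⁻¹ : ℝ) = Polynomial.C (4⁻¹ : ℝ) := by
    rw [← Polynomial.C_mul]; norm_num
  have hx : (X : R) * Polynomial.C (2⁻¹ : ℝ) + Polynomial.C (2⁻¹ : ℝ) * (X : R) = (X : R) := by
    have h1 : Polynomial.C (2⁻¹ : ℝ) + Polynomial.C (2⁻¹ : ℝ) = 1 := by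
      rw [← Polynomial.C_add]; norm_num
    calc (X : R) * Polynomial.C (2⁻¹ : ℝ) + Polynomial.C (2⁻¹ : ℝ) * (X : R)
        = (Polynomial.C (2⁻¹ : ℝ) + Polynomial.C (2⁻¹ : ℝ)) * X := by ring
      _ = X := by rw [h1, one_mul]
  have hexpand : D * D = ((X : R) * X) • (1 : Matrix (Fin n) (Fin n) R)
      + ((X : R) * Polynomial.C (2⁻¹ : ℝ)) • A1 + (Polynomial.C (2⁻¹ : ℝ) * (X : R)) • A1
      + (Polynomial.C (2⁻¹ : ℝ) * Polynomial.C (2⁻¹ : ℝ)) • (A1 * A1) := by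
    rw [hD]
    simp only [add_mul, mul_add, smul_mul_assoc, mul_smul_comm, one_mul, mul_one, smul_smul,
      smul_add]
    abel
  have hsum : ((X : R) * Polynomial.C (2⁻¹ : ℝ)) • A1
      + (Polynomial.C (2⁻¹ : ℝ) * (X : R)) • A1 = (X : R) • A1 := by
    rw [← add_smul, hx]
  have hkey : D * D + S = P := by
    rw [hexpand, hc, hS, hP, ← hsum, ← pow_two]
    abel
  refine ⟨Matrix.fromBlocks D (-1) (-1) 0, Matrix.fromBlocks 1 0 (-D) (-1), ?_, ?_, ?_⟩
  · -- det E
    have hfact : Matrix.fromBlocks D (-1) (-1) (0 : Matrix (Fin n) (Fin n) R) =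
        Matrix.fromBlocks (-1) D 0 (-1) *
          Matrix.fromBlocks (0 : Matrix (Fin n) (Fin n) R) 1 1 0 := by
      rw [fromBlocks_multiply]
      simp
    set J : Matrix (Fin n ⊕ Fin n) (Fin n ⊕ Fin n) R := Matrix.fromBlocks 0 1 1 0 with hJ
    have hJ2 : J * J = 1 := by
      rw [hJ, fromBlocks_multiply]
      simp [fromBlocks_one]
    have hdJ : J.det = 1 ∨ J.det = -1 := by
      have : J.det * J.det = 1 := by rw [← det_mul, hJ2, det_one]
      exact mul_self_eq_one_iff.mp this
    have hneg1 : ((-1 : Matrix (Fin n) (Fin n) R)).det * ((-1 : Matrix (Fin n) (Fin n) R)).det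
        = 1 := by
      rw [← det_mul, neg_mul_neg, one_mul, det_one]
    have hdU : (Matrix.fromBlocks (-1 : Matrix (Fin n) (Fin n) R) D 0 (-1)).det = 1 := by
      rw [det_fromBlocks_zero₂₁, hneg1]
    rcases hdJ with h | h
    · exact ⟨1, one_ne_zero, by rw [hfact, det_mul, hdU, h, mul_one]; simp⟩
    · exact ⟨-1, by norm_num, by rw [hfact, det_mul, hdU, h, one_mul]; simp⟩
  · -- det F
    refine ⟨(-1) ^ n, by positivity, ?_⟩
    rw [det_fromBlocks_zero₁₂, det_one, one_mul]
    have : (-1 : Matrix (Fin n) (Fin n) R) = (-1 : R) • 1 := by simp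
    rw [this, det_smul, det_one, mul_one, Fintype.card_fin]
    simp
  · rw [hA, fromBlocks_multiply, fromBlocks_multiply]
    simp only [Matrix.neg_mul, Matrix.mul_neg, Matrix.one_mul, Matrix.mul_one,
      Matrix.zero_mul, Matrix.mul_zero, neg_neg, add_zero, zero_add,
      add_neg_cancel, neg_add_cancel]
    rw [hkey]
    simp
end

section
/- Let $Q(x) = \sum_{j=0}^{2}Q_jx^j$ be a real $n\times n$ symmetric matrix polynomial with $Q_0 = I_n$, and $M_r = \begin{bmatrix} -\frac{1}{2}Q_1 & -I_n \\ Q_2-\frac{1}{4}Q_1^2 & -\frac{1}{2}Q_1\end{bmatrix}$. Then $\det(xI_{2n} - M_r) = \det(x^2 I_n + xQ_1 + Q_2)$. -/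
open Matrix

lemma det_aux {m α : Type*} [DecidableEq m] [Fintype m] [CommRing α]
    (a c : Matrix m m α) :
    (fromBlocks a 1 c a).det = (a * a - c).det := by
  have h : fromBlocks a (1 : Matrix m m α) c a =
      fromBlocks 1 0 a 1 * (fromBlocks 1 0 (-1) 1 * fromBlocks 1 1 0 1 * fromBlocks 1 0 (-1) 1) *
        fromBlocks (a * a - c) 0 0 1 * fromBlocks 1 0 a 1 := by
    simp [fromBlocks_multiply, Matrix.mul_sub, Matrix.sub_mul]
  rw [h]
  simp [det_mul, det_fromBlocks_zero₂₁, det_fromBlocks_zero₁₂]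

/-- `det(xI₂ₙ - M_r) = det(x²Iₙ + xQ₁ + Q₂)` for
`M_r = [[-½Q₁, -I], [Q₂ - ¼Q₁², -½Q₁]]` with `Q₁, Q₂` real symmetric. -/
theorem det_linearization_eq_det_revQ (n : ℕ)
    (Q1 Q2 : Matrix (Fin n) (Fin n) ℝ) (hQ1 : Q1ᵀ = Q1) (hQ2 : Q2ᵀ = Q2) :
    ((Polynomial.X : Polynomial ℝ) • (1 : Matrix (Fin n ⊕ Fin n) (Fin n ⊕ Fin n) (Polynomial ℝ)) -
        (Matrix.fromBlocks (-((2⁻¹ : ℝ) • Q1)) (-1) (Q2 - (4⁻¹ : ℝ) • (Q1 * Q1))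
          (-((2⁻¹ : ℝ) • Q1))).map Polynomial.C).det =
      (((Polynomial.X : Polynomial ℝ) ^ 2) • (1 : Matrix (Fin n) (Fin n) (Polynomial ℝ)) +
        (Polynomial.X : Polynomial ℝ) • Q1.map Polynomial.C + Q2.map Polynomial.C).det := by
  set P1 : Matrix (Fin n) (Fin n) (Polynomial ℝ) := Q1.map Polynomial.C with hP1
  set P2 : Matrix (Fin n) (Fin n) (Polynomial ℝ) := Q2.map Polynomial.C with hP2
  set a : Matrix (Fin n) (Fin n) (Polynomial ℝ) :=
    (Polynomial.X : Polynomial ℝ) • 1 + Polynomial.C (2⁻¹ : ℝ) • P1 with ha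
  set c : Matrix (Fin n) (Fin n) (Polynomial ℝ) :=
    -(P2 - Polynomial.C (4⁻¹ : ℝ) • (P1 * P1)) with hc
  have hM : (Polynomial.X : Polynomial ℝ) • (1 : Matrix (Fin n ⊕ Fin n) (Fin n ⊕ Fin n) (Polynomial ℝ)) -
      (Matrix.fromBlocks (-((2⁻¹ : ℝ) • Q1)) (-1) (Q2 - (4⁻¹ : ℝ) • (Q1 * Q1))
        (-((2⁻¹ : ℝ) • Q1))).map Polynomial.C = fromBlocks a 1 c a := by
    ext i j
    cases i <;> cases j <;>
      simp [ha, hc, hP1, hP2, fromBlocks, Matrix.one_apply, Matrix.mul_apply, map_sum,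
        Polynomial.C_mul, sub_eq_add_neg, Matrix.smul_apply]
  rw [hM, det_aux]
  congr 1
  have h2 : Polynomial.C (2⁻¹ : ℝ) • P1 * (Polynomial.C (2⁻¹ : ℝ) • P1)
      = Polynomial.C (4⁻¹ : ℝ) • (P1 * P1) := by
    rw [smul_mul_assoc, mul_smul_comm, smul_smul, ← Polynomial.C_mul]
    norm_num
  have h21 : (Polynomial.C (2⁻¹ : ℝ) : Polynomial ℝ) + Polynomial.C (2⁻¹ : ℝ) = 1 := by
    rw [← Polynomial.C_add]; norm_num
  have hx2 : (Polynomial.C ((1:ℝ)/2) : Polynomial ℝ) * 2 = 1 := by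
    rw [show (2 : Polynomial ℝ) = Polynomial.C (2 : ℝ) from (map_ofNat Polynomial.C 2).symm,
      ← Polynomial.C_mul, show ((1:ℝ)/2 * 2 : ℝ) = 1 from by norm_num, Polynomial.C_1]
  have key : a * a = (Polynomial.X : Polynomial ℝ) ^ 2 • 1 + (Polynomial.X : Polynomial ℝ) • P1
      + Polynomial.C (4⁻¹ : ℝ) • (P1 * P1) := by
    rw [ha, add_mul, mul_add, mul_add, h2]
    simp only [smul_mul_assoc, mul_smul_comm, Matrix.one_mul, Matrix.mul_one, smul_smul]
    match_scalars
    all_goals try ring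
    all_goals linear_combination Polynomial.X * hx2
  rw [key, hc]
  module
end
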